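/- arXiv:1605.00359 — 6 statements merged into one kernel-verified Lean document; each statement's English description precedes it below -/
import Mathlib

section
/- For 0 < q < 1 and nonnegative integers n, m, the q-Duhamel product of monomials satisfies z^n ⋆_q z^m = ([n]_q! [m]_q! / [n+m]_q!) z^{n+m}. -/
open Finset

/-- q-translation of the monomial `z^n`: `τ_q^ξ z^n = (z+qξ)(z+q²ξ)⋯(z+qⁿξ)`. -/
noncomputable def tauMon (q ξ z : ℂ) (n : ℕ) : ℂ :=
  ∏ k ∈ Finset.range n, (z + ξ * q ^ (k + 1))

/-- Jackson q-integral `∫_0^z f(t) d_q t = z(1-q) Σ_k f(zq^k) q^k`. -/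
noncomputable def jackson (q : ℂ) (f : ℂ → ℂ) (z : ℂ) : ℂ :=
  z * (1 - q) * ∑' k : ℕ, f (z * q ^ k) * q ^ k

/-- Backward q-derivative `(D_q f)(z) = (f(z) - f(qz)) / ((1-q) z)`. -/
noncomputable def Dq (q : ℂ) (f : ℂ → ℂ) (z : ℂ) : ℂ :=
  (f z - f (q * z)) / ((1 - q) * z)

/-- q-factorial `[n]_q! = ∏_{j=1}^n (1-q^j)/(1-q)`. -/
noncomputable def qfact (q : ℂ) (n : ℕ) : ℂ :=
  ∏ j ∈ Finset.range n, (1 - q ^ (j + 1)) / (1 - q)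

noncomputable def Qr (q : ℝ) (n : ℕ) : ℝ := ∏ j ∈ Finset.range n, (1 - q ^ (j + 1))

lemma fac_pos {q : ℝ} (hq0 : 0 < q) (hq1 : q < 1) (j : ℕ) : 0 < 1 - q ^ (j + 1) := by
  have h : q ^ (j + 1) < 1 := pow_lt_one₀ hq0.le hq1 (Nat.succ_ne_zero j)
  linarith

lemma Qr_pos {q : ℝ} (hq0 : 0 < q) (hq1 : q < 1) (n : ℕ) : 0 < Qr q n :=
  Finset.prod_pos fun j _ => fac_pos hq0 hq1 j

lemma QrSucc (q : ℝ) (k : ℕ) : Qr q (k + 1) = Qr q k * (1 - q ^ (k + 1)) :=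
  Finset.prod_range_succ _ k

lemma term_summable {q : ℝ} (hq0 : 0 < q) (hq1 : q < 1) (n m : ℕ) :
    Summable (fun k : ℕ => q ^ (k * (m + 1)) * ∏ j ∈ Finset.range n, (1 - q ^ (k + j + 1))) := by
  apply Summable.of_nonneg_of_le (fun k => ?_) (fun k => ?_)
    (summable_geometric_of_lt_one hq0.le hq1)
  · apply mul_nonneg (pow_nonneg hq0.le _)
    exact Finset.prod_nonneg fun j _ => by
      have := fac_pos hq0 hq1 (k + j); simpa [add_assoc] using this.le
  · calc q ^ (k * (m + 1)) * ∏ j ∈ Finset.range n, (1 - q ^ (k + j + 1))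
        ≤ q ^ (k * (m + 1)) * 1 := by
          apply mul_le_mul_of_nonneg_left _ (pow_nonneg hq0.le _)
          apply Finset.prod_le_one
          · exact fun j _ => by have := fac_pos hq0 hq1 (k + j); simpa [add_assoc] using this.le
          · exact fun j _ => by
              have : 0 < q ^ (k + j + 1) := pow_pos hq0 _
              linarith
      _ ≤ q ^ k := by
          rw [mul_one]
          exact pow_le_pow_of_le_one hq0.le hq1.le (Nat.le_mul_of_pos_right k m.succ_pos)

lemma key {q : ℝ} (hq0 : 0 < q) (hq1 : q < 1) :
    ∀ n m : ℕ, (∑' k : ℕ, q ^ (k * (m + 1)) * ∏ j ∈ Finset.range n, (1 - q ^ (k + j + 1)))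
      = Qr q n * Qr q m / Qr q (n + m + 1) := by
  intro n
  induction n with
  | zero =>
    intro m
    have h1 : q ^ (m + 1) < 1 := pow_lt_one₀ hq0.le hq1 (Nat.succ_ne_zero m)
    have h2 : (0:ℝ) ≤ q ^ (m + 1) := pow_nonneg hq0.le _
    have ht : (∑' k : ℕ, q ^ (k * (m + 1)) * ∏ j ∈ Finset.range 0, (1 - q ^ (k + j + 1)))
        = (1 - q ^ (m + 1))⁻¹ := by
      simp only [Finset.range_zero, Finset.prod_empty, mul_one]
      rw [show (fun k : ℕ => q ^ (k * (m+1))) = fun k : ℕ => (q ^ (m+1)) ^ k by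
        funext k; rw [← pow_mul, mul_comm]]
      exact tsum_geometric_of_lt_one h2 h1
    have hQm := (Qr_pos hq0 hq1 m).ne'
    have h0 : Qr q 0 = 1 := by simp [Qr]
    rw [ht, show (0:ℕ) + m + 1 = m + 1 by ring, QrSucc, h0, one_mul,
      div_mul_cancel_left₀ hQm]
  | succ n ih =>
    intro m
    have h1 : ∀ k : ℕ, q ^ (k * (m + 1)) * ∏ j ∈ Finset.range (n+1), (1 - q ^ (k + j + 1))
        = q ^ (k * (m + 1)) * ∏ j ∈ Finset.range n, (1 - q ^ (k + j + 1))
          - q ^ (n + 1) * (q ^ (k * (m + 1 + 1)) * ∏ j ∈ Finset.range n, (1 - q ^ (k + j + 1))) := by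
      intro k
      rw [Finset.prod_range_succ,
        show q ^ (k * (m + 1)) * ((∏ j ∈ Finset.range n, (1 - q ^ (k + j + 1))) * (1 - q ^ (k + n + 1)))
          = q ^ (k * (m + 1)) * ∏ j ∈ Finset.range n, (1 - q ^ (k + j + 1))
            - q ^ (k * (m + 1) + (k + n + 1)) * ∏ j ∈ Finset.range n, (1 - q ^ (k + j + 1)) by
          rw [pow_add]; ring,
        show k * (m + 1) + (k + n + 1) = (n + 1) + k * (m + 1 + 1) by ring, pow_add]
      ring
    rw [tsum_congr h1, Summable.tsum_sub (term_summable hq0 hq1 n m)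
      ((term_summable hq0 hq1 n (m+1)).mul_left (q ^ (n+1))),
      tsum_mul_left, ih m, ih (m + 1),
      show n + (m + 1) + 1 = (n + m + 1) + 1 by ring,
      show n + 1 + m + 1 = (n + m + 1) + 1 by ring,
      QrSucc q (n + m + 1), QrSucc q m, QrSucc q n]
    have hA := (Qr_pos hq0 hq1 (n + m + 1)).ne'
    have hB := (fac_pos hq0 hq1 (n + m + 1)).ne'
    field_simp
    ring

/-- For `0 < q < 1`, the q-Duhamel product of monomials:
`z^n ⋆_q z^m = ([n]_q! [m]_q! / [n+m]_q!) z^{n+m}`. -/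
theorem qDuhamel_monomials (q : ℝ) (hq0 : 0 < q) (hq1 : q < 1) (n m : ℕ)
    (z : ℂ) (hz : z ≠ 0) :
    Dq (q : ℂ) (fun x => jackson (q : ℂ)
        (fun t => tauMon (q : ℂ) (-t) x n * t ^ m) x) z
      = qfact (q : ℂ) n * qfact (q : ℂ) m / qfact (q : ℂ) (n + m) * z ^ (n + m) := by
  have hq1c : ((1:ℝ) - q : ℝ) ≠ 0 := by linarith
  have hqc : (1:ℂ) - (q:ℂ) ≠ 0 := by exact_mod_cast Complex.ofReal_ne_zero.mpr hq1c
  have hjack : ∀ x : ℂ, jackson (q:ℂ) (fun t => tauMon (q:ℂ) (-t) x n * t ^ m) x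
      = x ^ (n + m + 1) * (1 - (q:ℂ)) * ((Qr q n * Qr q m / Qr q (n+m+1) : ℝ) : ℂ) := by
    intro x
    unfold jackson
    have hterm : ∀ k : ℕ, (fun t => tauMon (q:ℂ) (-t) x n * t ^ m) (x * (q:ℂ)^k) * (q:ℂ)^k
        = x ^ (n+m) * (((q ^ (k*(m+1)) * ∏ j ∈ Finset.range n, (1 - q^(k+j+1)) : ℝ)) : ℂ) := by
      intro k
      show tauMon (q:ℂ) (-(x * (q:ℂ)^k)) x n * (x * (q:ℂ)^k) ^ m * (q:ℂ)^k = _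
      unfold tauMon
      have hfac : ∀ j ∈ Finset.range n, x + (-(x * (q:ℂ)^k)) * (q:ℂ)^(j+1)
          = x * (1 - (q:ℂ)^(k+j+1)) := by
        intro j _
        rw [show k + j + 1 = k + (j+1) by ring, pow_add]; ring
      rw [Finset.prod_congr rfl hfac, Finset.prod_mul_distrib, Finset.prod_const, Finset.card_range]
      push_cast
      ring
    rw [tsum_congr hterm, tsum_mul_left, ← Complex.ofReal_tsum, key hq0 hq1 n m]
    ring
  simp only [Dq]
  rw [hjack z, hjack ((q:ℂ) * z)]
  have hqfact : ∀ N : ℕ, qfact (q:ℂ) N = ((Qr q N : ℝ) : ℂ) / (1 - (q:ℂ)) ^ N := by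
    intro N
    unfold qfact Qr
    push_cast
    rw [Finset.prod_div_distrib, Finset.prod_const, Finset.card_range]
  rw [hqfact, hqfact, hqfact]
  have hQsplit : ((Qr q (n+m+1) : ℝ) : ℂ) = ((Qr q (n+m) : ℝ):ℂ) * (1 - (q:ℂ)^(n+m+1)) := by
    rw [QrSucc]; push_cast; ring
  push_cast
  rw [hQsplit]
  have hQn : ((Qr q n : ℝ) : ℂ) ≠ 0 := Complex.ofReal_ne_zero.mpr (Qr_pos hq0 hq1 n).ne'
  have hQm : ((Qr q m : ℝ) : ℂ) ≠ 0 := Complex.ofReal_ne_zero.mpr (Qr_pos hq0 hq1 m).ne'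
  have hQnm : ((Qr q (n+m) : ℝ) : ℂ) ≠ 0 := Complex.ofReal_ne_zero.mpr (Qr_pos hq0 hq1 (n+m)).ne'
  have hfacC : (1:ℂ) - (q:ℂ)^(n+m+1) ≠ 0 := by
    have h := (fac_pos hq0 hq1 (n+m)).ne'
    have : ((1 - q^(n+m+1) : ℝ) : ℂ) ≠ 0 := Complex.ofReal_ne_zero.mpr h
    push_cast at this; exact this
  field_simp
  ring
end

section
/- For f in the Wiener algebra W(𝔻) (absolutely convergent Taylor coefficients) and ξ ∈ ℂ, the q-translated function τ_q^ξ f(z) = Σ_n a_n (z+qξ)⋯(z+q^nξ) converges and satisfies ‖τ_q^ξ f‖_W ≤ (-|ξ|; q)_∞ ‖f‖_W, where the Wiener norm is the sum of absolute values of Taylor coefficients (as a function of z for fixed ξ). -/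
/-!
The coefficient of `z^m` in `τ_q^ξ z^n` has modulus `[n, k]_q q^(k(k+1)/2) |ξ|^k` with `k = n - m`,
so by Gauss's q-binomial theorem the `n`-th column of the matrix of `τ_q^ξ` has `ℓ¹` norm
`∏_{j<n} (1 + |ξ| q^(j+1)) ≤ (-|ξ|;q)_∞`. A matrix whose columns are bounded by `C` in `ℓ¹`
acts on `ℓ¹` with norm at most `C`; the interchange of summations behind this is done in `ℝ≥0∞`,
where it is unconditional.
-/

open Finset

/-- q-Pochhammer symbol `(a;q)_n`. -/
noncomputable def qPoch (a q : ℂ) (n : ℕ) : ℂ :=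
  ∏ j ∈ Finset.range n, (1 - a * q ^ j)

/-- Gaussian binomial coefficient. -/
noncomputable def qbinom (q : ℂ) (n k : ℕ) : ℂ :=
  qPoch q q n / (qPoch q q k * qPoch q q (n - k))

/-- Coefficient of `z^m` in `τ_q^ξ z^n = Σ_{k=0}^n binom_q(n,k) q^{k(k+1)/2} ξ^k z^{n-k}`. -/
noncomputable def tauCoeff (q : ℝ) (ξ : ℂ) (m n : ℕ) : ℂ :=
  if m ≤ n then qbinom (q : ℂ) n (n - m) * (q : ℂ) ^ ((n - m) * (n - m + 1) / 2) * ξ ^ (n - m)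
  else 0

open scoped ENNReal

theorem tsum_enorm_tsum_mul_le {ι κ R : Type*} [NormedRing R] (a : ι → R) (K : κ → ι → R)
    {C : ℝ≥0∞} (hC : ∀ i, ∑' k, ‖K k i‖ₑ ≤ C) :
    ∑' k, ‖∑' i, a i * K k i‖ₑ ≤ C * ∑' i, ‖a i‖ₑ :=
  calc ∑' k, ‖∑' i, a i * K k i‖ₑ ≤ ∑' k, ∑' i, ‖a i‖ₑ * ‖K k i‖ₑ :=
        ENNReal.tsum_le_tsum fun _ ↦ enorm_tsum_le_tsum_enorm.trans <|
          ENNReal.tsum_le_tsum fun _ ↦ enorm_smul_le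
    _ = ∑' i, ‖a i‖ₑ * ∑' k, ‖K k i‖ₑ := by
        rw [ENNReal.tsum_comm]; simp_rw [ENNReal.tsum_mul_left]
    _ ≤ ∑' i, ‖a i‖ₑ * C := by gcongr with i; exact hC i
    _ = C * ∑' i, ‖a i‖ₑ := by rw [ENNReal.tsum_mul_right, mul_comm]

theorem ENNReal.ofReal_tsum_norm {ι E : Type*} [SeminormedAddCommGroup E] {f : ι → E}
    (hf : Summable fun i ↦ ‖f i‖) : ENNReal.ofReal (∑' i, ‖f i‖) = ∑' i, ‖f i‖ₑ := by
  simp_rw [ENNReal.ofReal_tsum_of_nonneg (fun _ ↦ norm_nonneg _) hf, ofReal_norm]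

theorem summable_norm_tsum_mul_and_tsum_le {ι κ R : Type*} [NormedRing R] (a : ι → R)
    (K : κ → ι → R) {C : ℝ} (hC0 : 0 ≤ C) (hK : ∀ i, Summable fun k ↦ ‖K k i‖)
    (hC : ∀ i, ∑' k, ‖K k i‖ ≤ C) (ha : Summable fun i ↦ ‖a i‖) :
    Summable (fun k ↦ ‖∑' i, a i * K k i‖) ∧
      ∑' k, ‖∑' i, a i * K k i‖ ≤ C * ∑' i, ‖a i‖ := by
  have hE : ∑' k, ‖∑' i, a i * K k i‖ₑ ≤ ENNReal.ofReal (C * ∑' i, ‖a i‖) := by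
    rw [ENNReal.ofReal_mul hC0, ENNReal.ofReal_tsum_norm ha]
    refine tsum_enorm_tsum_mul_le a K fun i ↦ ?_
    rw [← ENNReal.ofReal_tsum_norm (hK i)]
    exact ENNReal.ofReal_le_ofReal (hC i)
  have hsum := tsum_enorm_ne_top_iff_summable_norm.mp (hE.trans_lt ENNReal.ofReal_lt_top).ne
  refine ⟨hsum, (ENNReal.ofReal_le_ofReal_iff (by positivity)).mp ?_⟩
  rwa [ENNReal.ofReal_tsum_norm hsum]

theorem prod_one_add_le_tprod {ι : Type*} {f : ι → ℝ} (hf0 : ∀ i, 0 ≤ f i) (hf : Summable f)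
    (s : Finset ι) : ∏ i ∈ s, (1 + f i) ≤ ∏' i, (1 + f i) :=
  ge_of_tendsto (Real.multipliable_one_add_of_summable hf).hasProd <|
    Filter.eventually_atTop.mpr ⟨s, fun _ hst ↦ prod_le_prod_of_subset_of_one_le hst
      (fun i _ ↦ by linarith [hf0 i]) (fun i _ _ ↦ by linarith [hf0 i])⟩

noncomputable def realQPoch (q : ℝ) (n : ℕ) : ℝ :=
  ∏ j ∈ range n, (1 - q * q ^ j)

-- Unlike `qbinom`, this vanishes for `k > n`, so that the q-Pascal rule needs no side condition.
noncomputable def realQBinom (q : ℝ) (n k : ℕ) : ℝ :=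
  if k ≤ n then realQPoch q n / (realQPoch q k * realQPoch q (n - k)) else 0

noncomputable def gaussCoeff (q : ℝ) (n k : ℕ) : ℝ :=
  realQBinom q n k * q ^ (k * (k + 1) / 2)

section

variable {q : ℝ}

theorem realQPoch_zero : realQPoch q 0 = 1 := prod_range_zero _

theorem realQPoch_succ (n : ℕ) : realQPoch q (n + 1) = realQPoch q n * (1 - q * q ^ n) :=
  prod_range_succ _ _

theorem realQPoch_ne_zero (hq : |q| < 1) (n : ℕ) : realQPoch q n ≠ 0 :=
  prod_ne_zero_iff.mpr fun j _ ↦ sub_ne_zero.mpr fun h ↦ by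
    have : |q| ^ (j + 1) < 1 := pow_lt_one₀ (abs_nonneg q) hq j.succ_ne_zero
    rw [← abs_pow, pow_succ', ← h, abs_one] at this
    exact this.false

theorem realQPoch_pos (hq0 : 0 ≤ q) (hq1 : q < 1) (n : ℕ) : 0 < realQPoch q n :=
  prod_pos fun j _ ↦ sub_pos.mpr <| by
    rw [← pow_succ']; exact pow_lt_one₀ hq0 hq1 j.succ_ne_zero

theorem realQBinom_nonneg (hq0 : 0 ≤ q) (hq1 : q < 1) (n k : ℕ) : 0 ≤ realQBinom q n k := by
  have := realQPoch_pos hq0 hq1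
  unfold realQBinom
  split_ifs
  · exact div_nonneg (this n).le (mul_pos (this k) (this _)).le
  · exact le_rfl

theorem realQBinom_zero_right (hq : |q| < 1) (n : ℕ) : realQBinom q n 0 = 1 := by
  simp [realQBinom, realQPoch_zero, realQPoch_ne_zero hq]

theorem realQBinom_self (hq : |q| < 1) (n : ℕ) : realQBinom q n n = 1 := by
  simp [realQBinom, realQPoch_zero, realQPoch_ne_zero hq]

theorem realQBinom_of_lt {n k : ℕ} (h : n < k) : realQBinom q n k = 0 :=
  if_neg h.not_ge

theorem realQBinom_succ_succ (hq : |q| < 1) {n k : ℕ} (hk : k ≤ n) :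
    realQBinom q (n + 1) (k + 1) = realQBinom q n (k + 1) + q ^ (n - k) * realQBinom q n k := by
  obtain rfl | hk := hk.eq_or_lt
  · simp [realQBinom_self hq, realQBinom_of_lt]
  obtain ⟨d, rfl⟩ := Nat.exists_eq_add_of_lt hk
  simp only [realQBinom, if_pos (by omega : k + 1 ≤ k + d + 1 + 1),
    if_pos (by omega : k + 1 ≤ k + d + 1), if_pos (by omega : k ≤ k + d + 1),
    show k + d + 1 + 1 - (k + 1) = d + 1 by omega, show k + d + 1 - (k + 1) = d by omega,
    show k + d + 1 - k = d + 1 by omega]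
  have hP := realQPoch_ne_zero hq
  have hk1 : 1 - q * q ^ k ≠ 0 := right_ne_zero_of_mul (realQPoch_succ k ▸ hP (k + 1))
  have hd1 : 1 - q * q ^ d ≠ 0 := right_ne_zero_of_mul (realQPoch_succ d ▸ hP (d + 1))
  rw [realQPoch_succ k, realQPoch_succ d, realQPoch_succ (k + d + 1)]
  have := hP k; have := hP d; have := hP (k + d + 1)
  -- after clearing denominators: `1 - q^(k+d+2) = (1 - q^(d+1)) + q^(d+1) (1 - q^(k+1))`
  field_simp
  ring

theorem gaussCoeff_zero_right (hq : |q| < 1) (n : ℕ) : gaussCoeff q n 0 = 1 := by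
  simp [gaussCoeff, realQBinom_zero_right hq]

theorem gaussCoeff_of_lt {n k : ℕ} (h : n < k) : gaussCoeff q n k = 0 := by
  simp [gaussCoeff, realQBinom_of_lt h]

theorem gaussCoeff_succ_succ (hq : |q| < 1) {n k : ℕ} (hk : k ≤ n) :
    gaussCoeff q (n + 1) (k + 1) = gaussCoeff q n (k + 1) + q ^ (n + 1) * gaussCoeff q n k := by
  have htri : (k + 1) * (k + 1 + 1) / 2 = k * (k + 1) / 2 + (k + 1) := by
    rw [show (k + 1) * (k + 1 + 1) = k * (k + 1) + (k + 1) * 2 by ring,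
      Nat.add_mul_div_right _ _ two_pos]
  have hpow : q ^ (n + 1) = q ^ (n - k) * q ^ (k + 1) := by rw [← pow_add]; congr 1; omega
  simp only [gaussCoeff, realQBinom_succ_succ hq hk, htri, pow_add q _ (k + 1), hpow]
  ring

theorem sum_range_gaussCoeff_mul_pow (hq : |q| < 1) (x : ℝ) (n : ℕ) :
    ∑ k ∈ range (n + 1), gaussCoeff q n k * x ^ k = ∏ j ∈ range n, (1 + x * q ^ (j + 1)) := by
  induction n with
  | zero => simp [gaussCoeff_zero_right hq]
  | succ n ih =>
    have hshift : ∑ k ∈ range (n + 2), gaussCoeff q n k * x ^ k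
        = 1 + ∑ k ∈ range (n + 1), gaussCoeff q n (k + 1) * x ^ (k + 1) := by
      rw [sum_range_succ', gaussCoeff_zero_right hq, pow_zero, one_mul, add_comm]
    have htop : ∑ k ∈ range (n + 2), gaussCoeff q n k * x ^ k
        = ∑ k ∈ range (n + 1), gaussCoeff q n k * x ^ k := by
      rw [sum_range_succ, gaussCoeff_of_lt n.lt_succ_self, zero_mul, add_zero]
    calc ∑ k ∈ range (n + 2), gaussCoeff q (n + 1) k * x ^ k
        = 1 + ∑ k ∈ range (n + 1), (gaussCoeff q n (k + 1) * x ^ (k + 1)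
            + x * q ^ (n + 1) * (gaussCoeff q n k * x ^ k)) := by
          rw [sum_range_succ', gaussCoeff_zero_right hq, pow_zero, one_mul, add_comm]
          congr 1
          refine sum_congr rfl fun k hk ↦ ?_
          rw [gaussCoeff_succ_succ hq (Nat.lt_succ_iff.mp (mem_range.mp hk))]
          ring
      _ = (∑ k ∈ range (n + 1), gaussCoeff q n k * x ^ k) * (1 + x * q ^ (n + 1)) := by
          rw [sum_add_distrib, ← mul_sum, ← add_assoc, ← hshift, htop]
          ring
      _ = ∏ j ∈ range (n + 1), (1 + x * q ^ (j + 1)) := by rw [ih, prod_range_succ]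

theorem qPoch_ofReal (n : ℕ) : qPoch q q n = realQPoch q n := by
  simp [qPoch, realQPoch]

theorem qbinom_ofReal {n k : ℕ} (hk : k ≤ n) : qbinom q n k = realQBinom q n k := by
  simp [qbinom, realQBinom, hk, qPoch_ofReal]

theorem norm_tauCoeff (hq0 : 0 ≤ q) (hq1 : q < 1) (ξ : ℂ) {m n : ℕ} (hmn : m ≤ n) :
    ‖tauCoeff q ξ m n‖ = gaussCoeff q n (n - m) * ‖ξ‖ ^ (n - m) := by
  rw [tauCoeff, if_pos hmn, qbinom_ofReal (n.sub_le m), gaussCoeff, norm_mul, norm_mul, norm_pow,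
    norm_pow, Complex.norm_real, Complex.norm_real,
    Real.norm_of_nonneg (realQBinom_nonneg hq0 hq1 _ _), Real.norm_of_nonneg hq0]

theorem hasSum_norm_tauCoeff (hq0 : 0 ≤ q) (hq1 : q < 1) (ξ : ℂ) (n : ℕ) :
    HasSum (fun m ↦ ‖tauCoeff q ξ m n‖) (∏ j ∈ range n, (1 + ‖ξ‖ * q ^ (j + 1))) := by
  have hq : |q| < 1 := abs_lt.mpr ⟨by linarith, hq1⟩
  have hsupp : ∀ m ∉ range (n + 1), ‖tauCoeff q ξ m n‖ = 0 := fun m hm ↦ by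
    rw [tauCoeff, if_neg (by simpa [Nat.lt_succ_iff] using hm), norm_zero]
  suffices ∑ m ∈ range (n + 1), ‖tauCoeff q ξ m n‖ = ∏ j ∈ range n, (1 + ‖ξ‖ * q ^ (j + 1)) from
    this ▸ hasSum_sum_of_ne_finset_zero hsupp
  rw [← sum_range_gaussCoeff_mul_pow hq, ← sum_range_reflect]
  refine sum_congr rfl fun m hm ↦ ?_
  have hmn : m ≤ n := Nat.lt_succ_iff.mp (mem_range.mp hm)
  rw [Nat.add_sub_cancel, norm_tauCoeff hq0 hq1 ξ (n.sub_le m), Nat.sub_sub_self hmn]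

theorem tsum_norm_tauCoeff_le (hq0 : 0 ≤ q) (hq1 : q < 1) (ξ : ℂ) (n : ℕ) :
    ∑' m, ‖tauCoeff q ξ m n‖ ≤ ∏' j : ℕ, (1 + ‖ξ‖ * q ^ j) := by
  have hgeom : Summable fun j : ℕ ↦ ‖ξ‖ * q ^ j :=
    (summable_geometric_of_lt_one hq0 hq1).mul_left _
  rw [(hasSum_norm_tauCoeff hq0 hq1 ξ n).tsum_eq]
  calc ∏ j ∈ range n, (1 + ‖ξ‖ * q ^ (j + 1))
      ≤ ∏ j ∈ range (n + 1), (1 + ‖ξ‖ * q ^ j) := by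
        rw [prod_range_succ']
        exact le_mul_of_one_le_right (prod_nonneg fun j _ ↦ by positivity) (by simp)
    _ ≤ ∏' j : ℕ, (1 + ‖ξ‖ * q ^ j) := prod_one_add_le_tprod (fun j ↦ by positivity) hgeom _

end

/-- For `f = Σ a_n z^n` in the Wiener algebra and `ξ ∈ ℂ`, the Taylor coefficients of
`τ_q^ξ f` (in `z`) are absolutely summable and
`‖τ_q^ξ f‖_W ≤ (-|ξ|;q)_∞ ‖f‖_W`. -/
theorem tau_wiener_bound (q : ℝ) (hq0 : 0 < q) (hq1 : q < 1) (ξ : ℂ) (a : ℕ → ℂ)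
    (ha : Summable fun n => ‖a n‖) :
    Summable (fun m => ‖∑' n : ℕ, a n * tauCoeff q ξ m n‖) ∧
      ∑' m : ℕ, ‖∑' n : ℕ, a n * tauCoeff q ξ m n‖
        ≤ (∏' j : ℕ, (1 + ‖ξ‖ * q ^ j)) * ∑' n : ℕ, ‖a n‖ :=
  summable_norm_tsum_mul_and_tsum_le a (fun m n ↦ tauCoeff q ξ m n)
    ((tsum_nonneg fun _ ↦ norm_nonneg _).trans (tsum_norm_tauCoeff_le hq0.le hq1 ξ 0))
    (fun n ↦ (hasSum_norm_tauCoeff hq0.le hq1 ξ n).summable)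
    (tsum_norm_tauCoeff_le hq0.le hq1 ξ) ha
end

section
/- The q-translation intertwines the backward and forward q-derivatives: for f a polynomial (or f ∈ W(𝔻)), τ_q^ξ (D_{q,z} f)(z) = D_{q,ξ}^+ (τ_q^ξ f)(z), where D_{q,ξ}^+ is the forward q-derivative in the translation variable ξ. -/
open Finset

/-- Linear extension of the q-translation to a power series with coefficients `a`. -/
noncomputable def tauF (q ξ : ℂ) (a : ℕ → ℂ) (z : ℂ) : ℂ :=
  ∑' n : ℕ, a n * tauMon q ξ z n

/-- q-number `[n]_q = (1-q^n)/(1-q)`. -/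
noncomputable def qnum (q : ℂ) (n : ℕ) : ℂ := (1 - q ^ n) / (1 - q)

lemma tauMon_key (q ξ z : ℂ) (hq : q ≠ 0) (n : ℕ) :
    tauMon q (ξ / q) z (n + 1) - tauMon q ξ z (n + 1)
      = ξ * (1 - q ^ (n + 1)) * tauMon q ξ z n := by
  have h1 : tauMon q (ξ / q) z (n + 1) = (z + ξ) * tauMon q ξ z n := by
    have : ∀ k, z + ξ / q * q ^ (k + 1) = z + ξ * q ^ k := by
      intro k; field_simp; ring
    unfold tauMon
    simp only [this]
    rw [Finset.prod_range_succ']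
    simp [mul_comm]
  have h2 : tauMon q ξ z (n + 1) = tauMon q ξ z n * (z + ξ * q ^ (n + 1)) := by
    unfold tauMon; rw [Finset.prod_range_succ]
  rw [h1, h2]; ring

/-- The q-translation intertwines the backward q-derivative in `z` with the forward
q-derivative in `ξ`: `τ_q^ξ (D_{q,z} f) = D_{q,ξ}^+ (τ_q^ξ f)` for a polynomial
`f(z) = Σ a_n z^n` (whose `D_q`-derivative has coefficients `a_{n+1}[n+1]_q`). -/
theorem tau_intertwines_Dq (q : ℝ) (hq0 : 0 < q) (hq1 : q < 1) (a : ℕ → ℂ)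
    (ha : ∃ N : ℕ, ∀ n, N ≤ n → a n = 0) (ξ z : ℂ) (hξ : ξ ≠ 0) :
    tauF (q : ℂ) ξ (fun n => a (n + 1) * qnum (q : ℂ) (n + 1)) z
      = (tauF (q : ℂ) (ξ / q) a z - tauF (q : ℂ) ξ a z) / ((1 - (q : ℂ)) * ξ) := by
  obtain ⟨N, hN⟩ := ha
  have hq : (q : ℂ) ≠ 0 := by exact_mod_cast hq0.ne'
  have hq1' : (1 : ℂ) - q ≠ 0 := by
    intro h
    have : (q : ℂ) = 1 := by linear_combination -h
    exact absurd (by exact_mod_cast this) hq1.ne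
  -- express each tauF as a finite sum over range (N+1)
  have hs : ∀ (ζ : ℂ) (b : ℕ → ℂ), (∀ n, N ≤ n → b n = 0) →
      tauF (q : ℂ) ζ b z = ∑ n ∈ Finset.range (N + 1), b n * tauMon (q : ℂ) ζ z n := by
    intro ζ b hb
    apply tsum_eq_sum
    intro n hn
    have : N ≤ n := by simp [Finset.mem_range] at hn; omega
    rw [hb n this, zero_mul]
  have hLHS := hs ξ (fun n => a (n + 1) * qnum (q : ℂ) (n + 1))
    (fun n hn => by simp [hN (n + 1) (le_trans hn (Nat.le_succ n))])
  have hR1 := hs (ξ / q) a hN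
  have hR2 := hs ξ a hN
  rw [hLHS, hR1, hR2, ← Finset.sum_sub_distrib]
  have : ∑ n ∈ Finset.range (N + 1),
      (a n * tauMon (q : ℂ) (ξ / q) z n - a n * tauMon (q : ℂ) ξ z n)
      = ∑ n ∈ Finset.range N,
        (a (n + 1) * (ξ * (1 - (q:ℂ) ^ (n + 1)) * tauMon (q : ℂ) ξ z n)) := by
    rw [Finset.sum_range_succ']
    have h0 : a 0 * tauMon (q : ℂ) (ξ / q) z 0 - a 0 * tauMon (q : ℂ) ξ z 0 = 0 := by
      simp [tauMon]
    rw [h0, add_zero]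
    apply Finset.sum_congr rfl
    intro n _
    rw [← mul_sub, tauMon_key _ _ _ hq]
  rw [this, Finset.sum_div]
  rw [Finset.sum_range_succ]
  simp only [hN (N + 1) (Nat.le_succ N), zero_mul, add_zero]
  apply Finset.sum_congr rfl
  intro n _
  rw [qnum]
  field_simp
end

section
/- For polynomials f, g, the q-Duhamel product admits the alternative expressions (f ⋆_q g)(z) = ∫_0^z (τ_q^{-t} D_q f)(z) g(t) d_q t + f(0) g(z) = ∫_0^z (τ_q^{-t} f)(z) (D_q g)(t) d_q t + f(z) g(0). -/
/-!
All series are finite sums, and the q-translation commutes with the q-derivative in both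
variables: `D_{q,z} (τ^{-t} f)(z) = (τ^{-t} D_q f)(z)` and
`D_{q,t} (τ^{-t} f)(z) = -q (τ^{-qt} D_q f)(z)`, while `(τ^{-t} f)(qt) = f(0)`.
Writing `F(z) = ∫_0^z (τ^{-t} f)(z) g(t) d_q t`, the difference `F(z) - F(qz)` splits into a change
of the integrand, handled by the first rule, and a change of the upper limit, whose boundary term
is `(τ^{-z} f)(qz) g(z) = f(0) g(z)`; this is the first formula. The second follows from the first
by q-integration by parts: the q-Leibniz rule together with the telescoping identity
`∫_0^z D_q h d_q t = h(z) - h(0)` moves `D_q` from `g` onto `t ↦ (τ^{-t} f)(z)`, where the second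
rule applies.
-/

open Finset

open Filter Topology Asymptotics

section Jackson

variable {q : ℂ}

lemma ne_one_of_norm_lt_one (hq : ‖q‖ < 1) : q ≠ 1 := by
  rintro rfl; simp at hq

lemma tendsto_mul_pow_nhds_zero (hq : ‖q‖ < 1) (z : ℂ) :
    Tendsto (fun k : ℕ => z * q ^ k) atTop (𝓝 0) := by
  simpa using (tendsto_pow_atTop_nhds_zero_of_norm_lt_one hq).const_mul z

lemma summable_jackson (hq : ‖q‖ < 1) {φ : ℂ → ℂ} (hφ : ContinuousAt φ 0) (z : ℂ) :
    Summable fun k : ℕ => φ (z * q ^ k) * q ^ k := by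
  refine summable_of_isBigO_nat (summable_geometric_of_lt_one (norm_nonneg q) hq) ?_
  have hbdd : (fun k : ℕ => φ (z * q ^ k)) =O[atTop] (fun _ => (1 : ℝ)) :=
    (hφ.tendsto.comp (tendsto_mul_pow_nhds_zero hq z)).isBigO_one ℝ
  simpa using hbdd.mul (isBigO_refl (fun k : ℕ => q ^ k) atTop).norm_right

lemma jackson_sub (hq : ‖q‖ < 1) {φ ψ : ℂ → ℂ} (hφ : ContinuousAt φ 0) (hψ : ContinuousAt ψ 0)
    (z : ℂ) : jackson q (fun t => φ t - ψ t) z = jackson q φ z - jackson q ψ z := by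
  simp only [jackson, sub_mul, (summable_jackson hq hφ z).tsum_sub (summable_jackson hq hψ z),
    mul_sub]

lemma jackson_const_mul (c : ℂ) (φ : ℂ → ℂ) (z : ℂ) :
    jackson q (fun t => c * φ t) z = c * jackson q φ z := by
  simp only [jackson, mul_assoc, tsum_mul_left]
  ring

lemma jackson_congr (hq0 : q ≠ 0) {z : ℂ} (hz : z ≠ 0) {φ ψ : ℂ → ℂ}
    (h : ∀ t ≠ 0, φ t = ψ t) : jackson q φ z = jackson q ψ z := by
  simp only [jackson, h _ (mul_ne_zero hz (pow_ne_zero _ hq0))]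

lemma jackson_comp_mul (φ : ℂ → ℂ) (z : ℂ) :
    jackson q (fun t => q * φ (q * t)) z = jackson q φ (q * z) := by
  have hterm : ∀ k : ℕ, q * φ (q * (z * q ^ k)) * q ^ k = q * (φ (q * z * q ^ k) * q ^ k) :=
    fun k => by rw [mul_assoc q z]; ring
  rw [jackson, jackson, tsum_congr hterm, tsum_mul_left]
  ring

lemma jackson_apply_mul_left (hq : ‖q‖ < 1) {φ : ℂ → ℂ} (hφ : ContinuousAt φ 0) (z : ℂ) :
    jackson q φ (q * z) = jackson q φ z - z * (1 - q) * φ z := by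
  have hshift := (summable_jackson hq hφ z).tsum_eq_zero_add
  simp only [pow_zero, mul_one] at hshift
  have hterm : ∀ k : ℕ, q * φ (q * (z * q ^ k)) * q ^ k = φ (z * q ^ (k + 1)) * q ^ (k + 1) :=
    fun k => by rw [show q * (z * q ^ k) = z * q ^ (k + 1) by ring]; ring
  rw [← jackson_comp_mul, jackson, jackson, hshift, tsum_congr hterm]
  ring

lemma Dq_mul (u g : ℂ → ℂ) (t : ℂ) :
    Dq q (fun s => u s * g s) t = u t * Dq q g t + Dq q u t * g (q * t) := by
  simp only [Dq]
  ring

lemma jackson_eq_sub_of_Dq_eq (hq : ‖q‖ < 1) (hq0 : q ≠ 0) {h φ : ℂ → ℂ}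
    (hh : ContinuousAt h 0) (hφ : ContinuousAt φ 0) (hD : ∀ t ≠ 0, Dq q h t = φ t)
    {z : ℂ} (hz : z ≠ 0) : jackson q φ z = h z - h 0 := by
  have hq1 : (1 : ℂ) - q ≠ 0 := sub_ne_zero.2 (ne_one_of_norm_lt_one hq).symm
  have hterm : ∀ k : ℕ, z * (1 - q) * (φ (z * q ^ k) * q ^ k)
      = h (z * q ^ k) - h (z * q ^ (k + 1)) := by
    intro k
    have hk : z * q ^ k ≠ 0 := mul_ne_zero hz (pow_ne_zero k hq0)
    rw [← hD _ hk, Dq, pow_succ, ← mul_assoc, mul_comm _ q]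
    field_simp
  have hsum : Summable fun k : ℕ => h (z * q ^ k) - h (z * q ^ (k + 1)) :=
    ((summable_jackson hq hφ z).mul_left _).congr hterm
  have hpartial : Tendsto (fun n => ∑ k ∈ range n, (h (z * q ^ k) - h (z * q ^ (k + 1))))
      atTop (𝓝 (h z - h 0)) := by
    simp only [sum_range_sub', pow_zero, mul_one]
    exact tendsto_const_nhds.sub (hh.tendsto.comp (tendsto_mul_pow_nhds_zero hq z))
  rw [jackson, ← tsum_mul_left, tsum_congr hterm]
  exact tendsto_nhds_unique hsum.hasSum.tendsto_sum_nat hpartial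

end Jackson

section Translation

variable {q : ℂ}

noncomputable def qDerivCoeff (q : ℂ) (a : ℕ → ℂ) (n : ℕ) : ℂ := a (n + 1) * qnum q (n + 1)

lemma one_sub_mul_qnum (hq : q ≠ 1) (n : ℕ) : (1 - q) * qnum q n = 1 - q ^ n :=
  mul_div_cancel₀ _ (sub_ne_zero.2 hq.symm)

lemma tauMon_zero (q ξ x : ℂ) : tauMon q ξ x 0 = 1 := prod_range_zero _

lemma tauMon_zero_left (q x : ℂ) (n : ℕ) : tauMon q 0 x n = x ^ n := by
  simp [tauMon]

lemma tauMon_succ (q ξ x : ℂ) (n : ℕ) :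
    tauMon q ξ x (n + 1) = tauMon q ξ x n * (x + ξ * q ^ (n + 1)) :=
  prod_range_succ _ _

lemma tauMon_succ' (q ξ x : ℂ) (n : ℕ) :
    tauMon q ξ x (n + 1) = (x + ξ * q) * tauMon q (q * ξ) x n := by
  rw [tauMon, prod_range_succ', mul_comm, zero_add, pow_one]
  congr 1
  exact prod_congr rfl fun k _ => by ring

lemma tauMon_mul_succ (q ξ x : ℂ) (n : ℕ) :
    tauMon q ξ (q * x) (n + 1) = q ^ (n + 1) * (x + ξ) * tauMon q ξ x n := by
  have h : tauMon q ξ (q * x) (n + 1) = ∏ k ∈ range (n + 1), q * (x + ξ * q ^ k) :=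
    prod_congr rfl fun k _ => by ring
  rw [h, prod_mul_distrib, prod_const, card_range, prod_range_succ', pow_zero, mul_one, tauMon]
  ring

lemma tauMon_sub_tauMon_mul (q ξ x : ℂ) (n : ℕ) :
    tauMon q ξ x (n + 1) - tauMon q ξ (q * x) (n + 1) = x * (1 - q ^ (n + 1)) * tauMon q ξ x n := by
  rw [tauMon_succ, tauMon_mul_succ]
  ring

lemma tauMon_sub_tauMon_mul_left (q ξ x : ℂ) (n : ℕ) :
    tauMon q ξ x (n + 1) - tauMon q (q * ξ) x (n + 1)
      = q * ξ * (1 - q ^ (n + 1)) * tauMon q (q * ξ) x n := by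
  rw [tauMon_succ', tauMon_succ]
  ring

lemma tauMon_neg_mul_self (q t : ℂ) (n : ℕ) : tauMon q (-t) (q * t) (n + 1) = 0 :=
  prod_eq_zero (mem_range.2 n.succ_pos) (by ring)

variable {a : ℕ → ℂ} {N : ℕ}

lemma tauF_eq_sum (ha : ∀ n, N ≤ n → a n = 0) (ξ x : ℂ) :
    tauF q ξ a x = ∑ n ∈ range N, a n * tauMon q ξ x n :=
  tsum_eq_sum fun n hn => by rw [ha n (by simpa using hn), zero_mul]

lemma tauF_zero_left (q : ℂ) (a : ℕ → ℂ) (x : ℂ) : tauF q 0 a x = ∑' n, a n * x ^ n := by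
  simp only [tauF, tauMon_zero_left]

lemma tauF_neg_mul_self (q t : ℂ) (a : ℕ → ℂ) : tauF q (-t) a (q * t) = a 0 := by
  rw [tauF, tsum_eq_single 0 fun n hn => ?_, tauMon_zero, mul_one]
  obtain ⟨m, rfl⟩ := Nat.exists_eq_succ_of_ne_zero hn
  rw [tauMon_neg_mul_self, mul_zero]

lemma tauF_zero_left_zero (q : ℂ) (a : ℕ → ℂ) : tauF q 0 a 0 = a 0 := by
  simpa using tauF_neg_mul_self q 0 a

lemma continuous_tauF (ha : ∀ n, N ≤ n → a n = 0) {ξ x : ℂ → ℂ} (hξ : Continuous ξ)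
    (hx : Continuous x) : Continuous fun t => tauF q (ξ t) a (x t) := by
  simp only [tauF_eq_sum ha, tauMon]
  fun_prop

lemma qDerivCoeff_eq_zero (ha : ∀ n, N ≤ n → a n = 0) (n : ℕ) (hn : N ≤ n) :
    qDerivCoeff q a n = 0 := by
  rw [qDerivCoeff, ha (n + 1) (by omega), zero_mul]

lemma tauF_sub_tauF_of_tauMon (hq : q ≠ 1) (ha : ∀ n, N ≤ n → a n = 0) {ξ ξ' η x x' y c : ℂ}
    (h : ∀ n, tauMon q ξ x (n + 1) - tauMon q ξ' x' (n + 1)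
      = c * (1 - q ^ (n + 1)) * tauMon q η y n) :
    tauF q ξ a x - tauF q ξ' a x' = c * (1 - q) * tauF q η (qDerivCoeff q a) y := by
  have ha' : ∀ n, N + 1 ≤ n → a n = 0 := fun n hn => ha n (by omega)
  rw [tauF_eq_sum ha', tauF_eq_sum ha', tauF_eq_sum (qDerivCoeff_eq_zero ha), ← sum_sub_distrib,
    sum_range_succ', tauMon_zero, tauMon_zero, sub_self, add_zero, mul_sum]
  refine sum_congr rfl fun n _ => ?_
  rw [← mul_sub, h, qDerivCoeff, ← one_sub_mul_qnum hq]
  ring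

lemma tauF_sub_tauF_mul (hq : q ≠ 1) (ha : ∀ n, N ≤ n → a n = 0) (ξ x : ℂ) :
    tauF q ξ a x - tauF q ξ a (q * x) = x * (1 - q) * tauF q ξ (qDerivCoeff q a) x :=
  tauF_sub_tauF_of_tauMon hq ha (tauMon_sub_tauMon_mul q ξ x)

lemma tauF_sub_tauF_mul_left (hq : q ≠ 1) (ha : ∀ n, N ≤ n → a n = 0) (ξ x : ℂ) :
    tauF q ξ a x - tauF q (q * ξ) a x = q * ξ * (1 - q) * tauF q (q * ξ) (qDerivCoeff q a) x :=
  tauF_sub_tauF_of_tauMon hq ha (tauMon_sub_tauMon_mul_left q ξ x)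

lemma Dq_tauF (hq : q ≠ 1) (ha : ∀ n, N ≤ n → a n = 0) (ξ : ℂ) {x : ℂ} (hx : x ≠ 0) :
    Dq q (tauF q ξ a) x = tauF q ξ (qDerivCoeff q a) x := by
  have hq' : (1 : ℂ) - q ≠ 0 := sub_ne_zero.2 hq.symm
  rw [Dq, tauF_sub_tauF_mul hq ha]
  field_simp

lemma Dq_tauF_neg_left (hq : q ≠ 1) (ha : ∀ n, N ≤ n → a n = 0) (x : ℂ) {t : ℂ} (ht : t ≠ 0) :
    Dq q (fun s => tauF q (-s) a x) t = -q * tauF q (-(q * t)) (qDerivCoeff q a) x := by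
  have hq' : (1 : ℂ) - q ≠ 0 := sub_ne_zero.2 hq.symm
  have h := tauF_sub_tauF_mul_left hq ha (-t) x
  rw [mul_neg] at h
  rw [Dq, h]
  field_simp

theorem Dq_jackson_tauF_mul (hq : ‖q‖ < 1) (ha : ∀ n, N ≤ n → a n = 0) {g : ℂ → ℂ}
    (hg : ContinuousAt g 0) {z : ℂ} (hz : z ≠ 0) :
    Dq q (fun x => jackson q (fun t => tauF q (-t) a x * g t) x) z
      = jackson q (fun t => tauF q (-t) (qDerivCoeff q a) z * g t) z + a 0 * g z := by
  have hq1 := ne_one_of_norm_lt_one hq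
  have hcont (x : ℂ) : ContinuousAt (fun t => tauF q (-t) a x * g t) 0 :=
    (continuous_tauF ha continuous_neg continuous_const).continuousAt.mul hg
  have hdiff : jackson q (fun t => tauF q (-t) a z * g t) z
      - jackson q (fun t => tauF q (-t) a (q * z) * g t) z
      = z * (1 - q) * jackson q (fun t => tauF q (-t) (qDerivCoeff q a) z * g t) z := by
    rw [← jackson_sub hq (hcont z) (hcont (q * z)), ← jackson_const_mul]
    congr 1
    funext t
    rw [← sub_mul, tauF_sub_tauF_mul hq1 ha]
    ring
  rw [Dq, jackson_apply_mul_left hq (hcont (q * z)),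
    div_eq_iff (mul_ne_zero (sub_ne_zero.2 hq1.symm) hz), tauF_neg_mul_self]
  linear_combination hdiff

theorem jackson_tauF_mul_Dq_add (hq : ‖q‖ < 1) (hq0 : q ≠ 0) (ha : ∀ n, N ≤ n → a n = 0)
    {b : ℕ → ℂ} {M : ℕ} (hb : ∀ n, M ≤ n → b n = 0) {z : ℂ} (hz : z ≠ 0) :
    jackson q (fun t => tauF q (-t) a z * Dq q (tauF q 0 b) t) z + tauF q 0 a z * tauF q 0 b 0
      = jackson q (fun t => tauF q (-t) (qDerivCoeff q a) z * tauF q 0 b t) z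
        + a 0 * tauF q 0 b z := by
  have hq1 := ne_one_of_norm_lt_one hq
  set u : ℂ → ℂ := fun t => tauF q (-t) a z
  set g : ℂ → ℂ := tauF q 0 b
  set g' : ℂ → ℂ := tauF q 0 (qDerivCoeff q b)
  set ψ : ℂ → ℂ := fun t => tauF q (-t) (qDerivCoeff q a) z * g t
  have hu : Continuous u := continuous_tauF ha continuous_neg continuous_const
  have hg : Continuous g := continuous_tauF hb continuous_const continuous_id
  have hg' : Continuous g' :=
    continuous_tauF (qDerivCoeff_eq_zero hb) continuous_const continuous_id
  have hψ : Continuous ψ :=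
    (continuous_tauF (qDerivCoeff_eq_zero ha) continuous_neg continuous_const).mul hg
  have hψq : Continuous fun t => q * ψ (q * t) := by fun_prop
  have hleibniz : ∀ t ≠ 0, Dq q (fun s => u s * g s) t = u t * g' t - q * ψ (q * t) := by
    intro t ht
    rw [Dq_mul, Dq_tauF hq1 hb 0 ht, Dq_tauF_neg_left hq1 ha z ht]
    ring
  have hftc := jackson_eq_sub_of_Dq_eq (h := fun s => u s * g s)
    (φ := fun t => u t * g' t - q * ψ (q * t)) hq hq0 (hu.mul hg).continuousAt
    ((hu.mul hg').sub hψq).continuousAt hleibniz hz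
  rw [jackson_sub (φ := fun t => u t * g' t) hq (hu.mul hg').continuousAt hψq.continuousAt,
    jackson_comp_mul, jackson_apply_mul_left hq hψ.continuousAt] at hftc
  have hdiag : u z - z * (1 - q) * tauF q (-z) (qDerivCoeff q a) z = a 0 := by
    rw [← tauF_neg_mul_self q z a]
    linear_combination tauF_sub_tauF_mul hq1 ha (-z) z
  have hu0 : u 0 = tauF q 0 a z := by simp only [u, neg_zero]
  rw [jackson_congr hq0 hz fun t ht => congrArg (u t * ·) (Dq_tauF hq1 hb 0 ht)]
  linear_combination hftc - hu0 * g 0 + g z * hdiag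

end Translation

/-- For polynomials `f(z) = Σ a_n z^n` and `g(z) = Σ b_n z^n`, the q-Duhamel product
`(f ⋆_q g)(z) = D_{q,z} ∫_0^z (τ_q^{-t} f)(z) g(t) d_q t` equals both
`∫_0^z (τ_q^{-t} D_q f)(z) g(t) d_q t + f(0) g(z)` and
`∫_0^z (τ_q^{-t} f)(z) (D_q g)(t) d_q t + f(z) g(0)`. -/
theorem qDuhamel_alternative (q : ℝ) (hq0 : 0 < q) (hq1 : q < 1) (a b : ℕ → ℂ)
    (ha : ∃ N : ℕ, ∀ n, N ≤ n → a n = 0) (hb : ∃ N : ℕ, ∀ n, N ≤ n → b n = 0)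
    (f g : ℂ → ℂ) (hf : ∀ z, f z = ∑' n : ℕ, a n * z ^ n)
    (hg : ∀ z, g z = ∑' n : ℕ, b n * z ^ n) (z : ℂ) (hz : z ≠ 0) :
    Dq (q : ℂ) (fun x => jackson (q : ℂ) (fun t => tauF (q : ℂ) (-t) a x * g t) x) z
        = jackson (q : ℂ)
            (fun t => tauF (q : ℂ) (-t) (fun n => a (n + 1) * qnum (q : ℂ) (n + 1)) z * g t) z
          + f 0 * g z ∧
      Dq (q : ℂ) (fun x => jackson (q : ℂ) (fun t => tauF (q : ℂ) (-t) a x * g t) x) z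
        = jackson (q : ℂ) (fun t => tauF (q : ℂ) (-t) a z * Dq (q : ℂ) g t) z
          + f z * g 0 := by
  obtain ⟨N, ha⟩ := ha
  obtain ⟨M, hb⟩ := hb
  have hqnorm : ‖(q : ℂ)‖ < 1 := by simpa [abs_of_pos hq0] using hq1
  have hqne : (q : ℂ) ≠ 0 := Complex.ofReal_ne_zero.2 hq0.ne'
  obtain rfl : f = tauF q 0 a := funext fun x => by rw [hf, tauF_zero_left]
  obtain rfl : g = tauF q 0 b := funext fun x => by rw [hg, tauF_zero_left]
  have hfirst := Dq_jackson_tauF_mul (g := tauF q 0 b) hqnorm ha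
    (continuous_tauF hb continuous_const continuous_id).continuousAt hz
  rw [tauF_zero_left_zero]
  exact ⟨hfirst, hfirst.trans (jackson_tauF_mul_Dq_add hqnorm hqne ha hb hz).symm⟩
end

section
/- The Wiener algebra W(𝔻) equipped with the q-Duhamel product ⋆_q is a commutative unital Banach algebra: ‖f ⋆_q g‖_W ≤ ‖f‖_W ‖g‖_W, the product is associative, commutative, and 1 is the unit. -/
open Finset

/-- Coefficients of the q-Duhamel product:
`(f ⋆_q g)_n = Σ_{k=0}^n a_k b_{n-k} [k]_q! [n-k]_q! / [n]_q!`. -/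
noncomputable def duh (q : ℂ) (a b : ℕ → ℂ) (n : ℕ) : ℂ :=
  ∑ k ∈ Finset.range (n + 1), a k * b (n - k) * qfact q k * qfact q (n - k) / qfact q n

/-!
Multiplying the `n`-th coefficient by `[n]_q!` turns `⋆_q` into the Cauchy product:
`[n]_q! (f ⋆_q g)_n = Σ_k (a_k [k]_q!) (b_{n-k} [n-k]_q!)`. Hence `⋆_q` is the multiplication
of `ℂ⟦X⟧` transported along an injective linear map, which gives commutativity, associativity
and the unit. For the norm bound, `[k]_q! [n-k]_q! ≤ [n]_q!` for real `q ≥ 0` because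
`[j]_q = 1 + q + ⋯ + q^(j-1)` grows with `j`; so `|(f ⋆_q g)_n|` is dominated by the Cauchy
product of `|a|` and `|b|`, whose sum is `‖f‖_W ‖g‖_W`.
-/

open PowerSeries

noncomputable def qfactSeries (q : ℂ) (a : ℕ → ℂ) : ℂ⟦X⟧ :=
  PowerSeries.mk fun n => a n * qfact q n

section Algebra

variable {q : ℂ}

@[simp]
lemma qfact_zero (q : ℂ) : qfact q 0 = 1 := prod_range_zero _

lemma duh_eq_coeff_div (q : ℂ) (a b : ℕ → ℂ) (n : ℕ) :
    duh q a b n = coeff n (qfactSeries q a * qfactSeries q b) / qfact q n := by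
  rw [coeff_mul, Nat.sum_antidiagonal_eq_sum_range_succ_mk, duh, sum_div]
  refine sum_congr rfl fun k _ => ?_
  simp only [qfactSeries, coeff_mk]
  ring

lemma qfactSeries_duh (hq : ∀ n, qfact q n ≠ 0) (a b : ℕ → ℂ) :
    qfactSeries q (duh q a b) = qfactSeries q a * qfactSeries q b := by
  ext n
  rw [qfactSeries, coeff_mk, duh_eq_coeff_div, div_mul_cancel₀ _ (hq n)]

lemma qfactSeries_injective (hq : ∀ n, qfact q n ≠ 0) : Function.Injective (qfactSeries q) := by
  intro a b h
  funext n
  have := congrArg (coeff n) h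
  simp only [qfactSeries, coeff_mk] at this
  exact mul_right_cancel₀ (hq n) this

lemma qfactSeries_single_zero (q : ℂ) : qfactSeries q (fun n => if n = 0 then 1 else 0) = 1 := by
  ext n
  rcases eq_or_ne n 0 with rfl | hn <;> simp [qfactSeries, coeff_one, *]

lemma duh_comm (q : ℂ) (a b : ℕ → ℂ) : duh q a b = duh q b a := by
  funext n
  rw [duh_eq_coeff_div, duh_eq_coeff_div, mul_comm]

lemma duh_assoc (hq : ∀ n, qfact q n ≠ 0) (a b c : ℕ → ℂ) :
    duh q (duh q a b) c = duh q a (duh q b c) :=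
  qfactSeries_injective hq <| by simp only [qfactSeries_duh hq, mul_assoc]

lemma duh_single_zero_left (hq : ∀ n, qfact q n ≠ 0) (a : ℕ → ℂ) :
    duh q (fun n => if n = 0 then 1 else 0) a = a :=
  qfactSeries_injective hq <| by rw [qfactSeries_duh hq, qfactSeries_single_zero, one_mul]

end Algebra

noncomputable def qfactReal (q : ℝ) (n : ℕ) : ℝ :=
  ∏ j ∈ range n, ∑ i ∈ range (j + 1), q ^ i

section NormBound

variable {q : ℝ}

lemma ofReal_qfactReal (hq : q ≠ 1) (n : ℕ) : (qfactReal q n : ℂ) = qfact q n := by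
  have hq' : (q : ℂ) ≠ 1 := mod_cast hq
  rw [qfactReal, qfact]
  push_cast
  refine prod_congr rfl fun j _ => ?_
  rw [geom_sum_eq hq', ← neg_div_neg_eq, neg_sub, neg_sub]

lemma one_le_qfactReal (hq : 0 ≤ q) (n : ℕ) : 1 ≤ qfactReal q n :=
  one_le_prod fun j _ => by
    rw [sum_range_succ']
    simpa using sum_nonneg fun i _ => pow_nonneg hq (i + 1)

lemma qfact_ofReal_ne_zero (hq0 : 0 ≤ q) (hq1 : q ≠ 1) (n : ℕ) : qfact (q : ℂ) n ≠ 0 := by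
  rw [← ofReal_qfactReal hq1]
  exact_mod_cast (zero_lt_one.trans_le (one_le_qfactReal hq0 n)).ne'

lemma qfactReal_mul_qfactReal_le (hq : 0 ≤ q) (k m : ℕ) :
    qfactReal q k * qfactReal q m ≤ qfactReal q (k + m) := by
  rw [qfactReal, qfactReal, qfactReal, prod_range_add]
  refine mul_le_mul_of_nonneg_left (prod_le_prod (fun j _ => ?_) fun j _ => ?_)
    (zero_le_one.trans (one_le_qfactReal hq k))
  · exact sum_nonneg fun i _ => pow_nonneg hq i
  · exact sum_le_sum_of_subset_of_nonneg (range_mono (by omega))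
      fun i _ _ => pow_nonneg hq i

lemma norm_qfact_mul_qfact_div_qfact_le_one (hq0 : 0 ≤ q) (hq1 : q ≠ 1) {k n : ℕ} (hk : k ≤ n) :
    ‖qfact (q : ℂ) k * qfact (q : ℂ) (n - k) / qfact (q : ℂ) n‖ ≤ 1 := by
  have hpos := fun m => zero_lt_one.trans_le (one_le_qfactReal hq0 m)
  rw [← ofReal_qfactReal hq1, ← ofReal_qfactReal hq1, ← ofReal_qfactReal hq1,
    ← Complex.ofReal_mul, ← Complex.ofReal_div, Complex.norm_real,
    Real.norm_of_nonneg (div_nonneg (mul_nonneg (hpos k).le (hpos _).le) (hpos n).le),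
    div_le_one (hpos n)]
  simpa [Nat.add_sub_cancel' hk] using qfactReal_mul_qfactReal_le hq0 k (n - k)

lemma norm_duh_le (hq0 : 0 ≤ q) (hq1 : q ≠ 1) (a b : ℕ → ℂ) (n : ℕ) :
    ‖duh (q : ℂ) a b n‖ ≤ ∑ k ∈ range (n + 1), ‖a k‖ * ‖b (n - k)‖ := by
  refine (norm_sum_le _ _).trans (sum_le_sum fun k hk => ?_)
  calc ‖a k * b (n - k) * qfact (q : ℂ) k * qfact (q : ℂ) (n - k) / qfact (q : ℂ) n‖
      = ‖a k‖ * ‖b (n - k)‖ *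
          ‖qfact (q : ℂ) k * qfact (q : ℂ) (n - k) / qfact (q : ℂ) n‖ := by
        rw [← norm_mul, ← norm_mul]
        ring_nf
    _ ≤ ‖a k‖ * ‖b (n - k)‖ := mul_le_of_le_one_right (by positivity)
        (norm_qfact_mul_qfact_div_qfact_le_one hq0 hq1 (Nat.lt_succ_iff.mp (mem_range.mp hk)))

variable {a b : ℕ → ℂ}

lemma summable_sum_range_norm_mul_norm (ha : Summable fun n => ‖a n‖)
    (hb : Summable fun n => ‖b n‖) :
    Summable fun n => ∑ k ∈ range (n + 1), ‖a k‖ * ‖b (n - k)‖ := by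
  refine (summable_norm_sum_mul_range_of_summable_norm (f := fun n => ‖a n‖)
    (g := fun n => ‖b n‖) (by simpa using ha) (by simpa using hb)).congr fun n => ?_
  exact Real.norm_of_nonneg (sum_nonneg fun _ _ => by positivity)

lemma summable_norm_duh (hq0 : 0 ≤ q) (hq1 : q ≠ 1) (ha : Summable fun n => ‖a n‖)
    (hb : Summable fun n => ‖b n‖) : Summable fun n => ‖duh (q : ℂ) a b n‖ :=
  (summable_sum_range_norm_mul_norm ha hb).of_nonneg_of_le (fun _ => norm_nonneg _)
    (norm_duh_le hq0 hq1 a b)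

lemma tsum_norm_duh_le (hq0 : 0 ≤ q) (hq1 : q ≠ 1) (ha : Summable fun n => ‖a n‖)
    (hb : Summable fun n => ‖b n‖) :
    ∑' n, ‖duh (q : ℂ) a b n‖ ≤ (∑' n, ‖a n‖) * ∑' n, ‖b n‖ := by
  rw [tsum_mul_tsum_eq_tsum_sum_range_of_summable_norm (by simpa using ha) (by simpa using hb)]
  exact (summable_norm_duh hq0 hq1 ha hb).tsum_le_tsum (norm_duh_le hq0 hq1 a b)
    (summable_sum_range_norm_mul_norm ha hb)

end NormBound

/-- `(W(𝔻), ⋆_q)` is a commutative unital Banach algebra: the q-Duhamel product of two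
absolutely summable coefficient sequences is absolutely summable with
`‖f ⋆_q g‖_W ≤ ‖f‖_W ‖g‖_W`, and `⋆_q` is commutative, associative and has `1` as unit. -/
theorem wiener_qDuhamel_banach_algebra (q : ℝ) (hq0 : 0 < q) (hq1 : q < 1) :
    (∀ a b : ℕ → ℂ, (Summable fun n => ‖a n‖) → (Summable fun n => ‖b n‖) →
        (Summable fun n => ‖duh (q : ℂ) a b n‖) ∧
          ∑' n : ℕ, ‖duh (q : ℂ) a b n‖ ≤ (∑' n : ℕ, ‖a n‖) * ∑' n : ℕ, ‖b n‖) ∧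
      (∀ a b : ℕ → ℂ, duh (q : ℂ) a b = duh (q : ℂ) b a) ∧
      (∀ a b c : ℕ → ℂ, duh (q : ℂ) (duh (q : ℂ) a b) c = duh (q : ℂ) a (duh (q : ℂ) b c)) ∧
      (∀ a : ℕ → ℂ, duh (q : ℂ) (fun n => if n = 0 then 1 else 0) a = a) := by
  have hq : ∀ n, qfact (q : ℂ) n ≠ 0 := qfact_ofReal_ne_zero hq0.le hq1.ne
  exact ⟨fun a b ha hb =>
      ⟨summable_norm_duh hq0.le hq1.ne ha hb, tsum_norm_duh_le hq0.le hq1.ne ha hb⟩,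
    duh_comm _, duh_assoc hq, duh_single_zero_left hq⟩
end

section
/- The n-th power of the q-integration operator is given by the q-Duhamel product with z^n/[n]_q!: for f ∈ W(𝔻), (V_q^n f)(z) = (1/[n]_q!) (z^n ⋆_q f)(z), where V_q f(z) = ∫_0^z f(t) d_q t. -/
open Finset

/-- The Jackson q-integration operator on Taylor coefficients: `z^m ↦ z^{m+1}/[m+1]_q`. -/
noncomputable def Vcoeff (q : ℂ) (a : ℕ → ℂ) : ℕ → ℂ
  | 0 => 0
  | (m + 1) => a m / ((1 - q ^ (m + 1)) / (1 - q))

/-! Both sides are explicit on coefficients: `V_q` sends `z^k` to `([k]_q! / [k+1]_q!) z^(k+1)`, so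
`V_q^n` sends it to `([k]_q! / [k+n]_q!) z^(k+n)`, while `z^n ⋆_q z^k = ([n]_q! [k]_q! / [n+k]_q!) z^(n+k)`. -/

lemma qfact_succ (q : ℂ) (n : ℕ) :
    qfact q (n + 1) = qfact q n * ((1 - q ^ (n + 1)) / (1 - q)) :=
  prod_range_succ _ n

lemma qfact_ne_zero {q : ℂ} (hq : ¬IsOfFinOrder q) (n : ℕ) : qfact q n ≠ 0 := by
  have pow_ne_one (k : ℕ) (hk : 0 < k) : q ^ k ≠ 1 := fun h =>
    hq (isOfFinOrder_iff_pow_eq_one.2 ⟨k, hk, h⟩)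
  refine prod_ne_zero_iff.2 fun j _ => div_ne_zero ?_ ?_
  · exact sub_ne_zero.2 (pow_ne_one (j + 1) j.succ_pos).symm
  · exact sub_ne_zero.2 (pow_one q ▸ pow_ne_one 1 one_pos).symm

lemma Vcoeff_succ {q : ℂ} (hq : ¬IsOfFinOrder q) (a : ℕ → ℂ) (m : ℕ) :
    Vcoeff q a (m + 1) = a m * qfact q m / qfact q (m + 1) := by
  rw [Vcoeff, qfact_succ, mul_comm (qfact q m), mul_div_mul_right _ _ (qfact_ne_zero hq m)]

lemma Vcoeff_iterate_apply {q : ℂ} (hq : ¬IsOfFinOrder q) (a : ℕ → ℂ) (n m : ℕ) :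
    (Vcoeff q)^[n] a m = if n ≤ m then a (m - n) * qfact q (m - n) / qfact q m else 0 := by
  induction n generalizing m with
  | zero => simp [mul_div_assoc, div_self (qfact_ne_zero hq m)]
  | succ n ih =>
    rw [Function.iterate_succ_apply']
    cases m with
    | zero => simp [Vcoeff]
    | succ m =>
      rw [Vcoeff_succ hq, ih m]
      by_cases h : n ≤ m
      · simp only [h, if_true, Nat.add_le_add_iff_right, Nat.add_sub_add_right]
        field_simp [qfact_ne_zero hq m]
      · simp [h]

lemma duh_single_left (q : ℂ) (b : ℕ → ℂ) (n m : ℕ) :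
    duh q (fun k => if k = n then 1 else 0) b m
      = if n ≤ m then b (m - n) * qfact q n * qfact q (m - n) / qfact q m else 0 := by
  split_ifs with h
  · rw [duh, sum_eq_single_of_mem n (mem_range.2 (by omega)) (fun k _ hk => by simp [hk])]
    simp
  · exact sum_eq_zero fun k hk => by simp [show k ≠ n by grind]

theorem Vq_pow_eq_duhamel_general (q : ℝ) (hq0 : 0 < q) (hq1 : q < 1) (a : ℕ → ℂ)
    (n m : ℕ) :
    (Vcoeff (q : ℂ))^[n] a m
      = (1 / qfact (q : ℂ) n) * duh (q : ℂ) (fun k => if k = n then 1 else 0) a m := by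
  have hq : ¬IsOfFinOrder (q : ℂ) := fun h => by
    obtain ⟨k, hk, hpow⟩ := isOfFinOrder_iff_pow_eq_one.1 h
    have : q ^ k = 1 := by exact_mod_cast hpow
    exact (pow_lt_one₀ hq0.le hq1 hk.ne').ne this
  rw [Vcoeff_iterate_apply hq, duh_single_left]
  split_ifs
  · field_simp [qfact_ne_zero hq n]
  · simp

/-- `V_q^n f = (1/[n]_q!) (z^n ⋆_q f)` for `f ∈ W(𝔻)`, on Taylor coefficients. -/
theorem Vq_pow_eq_duhamel (q : ℝ) (hq0 : 0 < q) (hq1 : q < 1) (a : ℕ → ℂ)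
    (ha : Summable fun n => ‖a n‖) (n m : ℕ) :
    (Vcoeff (q : ℂ))^[n] a m
      = (1 / qfact (q : ℂ) n) * duh (q : ℂ) (fun k => if k = n then 1 else 0) a m :=
  Vq_pow_eq_duhamel_general q hq0 hq1 a n m
end
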